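/- For every pair of finite simple graphs G₁ and G₂, χ_NL(G₁ ∨ G₂) = χ_NL(G₁) + χ_NL(G₂). -/

import Mathlib

open SimpleGraph

/-- A coloring `c : V → Fin k` is a *neighbor-locating coloring* of `G` if it is proper and
any two distinct vertices with the same color have different sets of colors on their
open neighborhoods. -/
def IsNLColoring {V : Type*} (G : SimpleGraph V) {k : ℕ} (c : V → Fin k) : Prop :=
  (∀ u v : V, G.Adj u v → c u ≠ c v) ∧
  ∀ u v : V, u ≠ v → c u = c v → c '' (G.neighborSet u) ≠ c '' (G.neighborSet v)

/-- The neighbor-locating chromatic number: the least `k` admitting an NL-coloring. -/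
noncomputable def nlChromaticNumber {V : Type*} (G : SimpleGraph V) : ℕ :=
  sInf {k : ℕ | ∃ c : V → Fin k, IsNLColoring G c}

/-- The join of two graphs: all edges of each plus all pairs across. -/
def graphJoin {α β : Type*} (G : SimpleGraph α) (H : SimpleGraph β) : SimpleGraph (α ⊕ β) where
  Adj x y :=
    match x, y with
    | Sum.inl a, Sum.inl b => G.Adj a b
    | Sum.inr a, Sum.inr b => H.Adj a b
    | Sum.inl _, Sum.inr _ => True
    | Sum.inr _, Sum.inl _ => True
  symm := ⟨by rintro (a | a) (b | b) h <;> first | exact G.adj_symm h | exact H.adj_symm h | trivial⟩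
  loopless := ⟨by rintro (a | a) h <;> first | exact G.irrefl h | exact H.irrefl h⟩

/-!
Every vertex on one side of the join is adjacent to every vertex on the other, so an
NL-coloring of the join uses disjoint palettes on the two sides, and the whole palette of the
other side appears in every neighborhood. Removing it, the restriction to each side is an
NL-coloring of that graph with its own palette, whence `≥`. Conversely, NL-colorings of the two
graphs with disjoint palettes combine into one of the join, whence `≤`.
-/

open Function Set

namespace IsNLColoring

variable {V : Type*} {G : SimpleGraph V} {k m : ℕ}

theorem of_comp {c : V → Fin m} {g : Fin m → Fin k} (h : IsNLColoring G (g ∘ c)) :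
    IsNLColoring G c := by
  refine ⟨fun u v huv hc => h.1 u v huv (congrArg g hc), fun u v hne hc himg => ?_⟩
  refine h.2 u v hne (congrArg g hc) ?_
  rw [image_comp, image_comp, himg]

theorem comp_injective {c : V → Fin k} (hc : IsNLColoring G c) {f : Fin k → Fin m}
    (hf : Injective f) : IsNLColoring G (f ∘ c) := by
  refine ⟨fun u v huv h => hc.1 u v huv (hf h), fun u v hne h himg => hc.2 u v hne (hf h) ?_⟩
  rwa [image_comp, image_comp, (image_injective.2 hf).eq_iff] at himg

end IsNLColoring

theorem isNLColoring_of_injective {V : Type*} (G : SimpleGraph V) {k : ℕ} {c : V → Fin k}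
    (hc : Injective c) : IsNLColoring G c :=
  ⟨fun _ _ huv h => G.ne_of_adj huv (hc h), fun _ _ hne h => absurd (hc h) hne⟩

section nlChromaticNumber

variable {V : Type*} {G : SimpleGraph V} {k : ℕ}

theorem nlChromaticNumber_le {c : V → Fin k} (hc : IsNLColoring G c) :
    nlChromaticNumber G ≤ k :=
  Nat.sInf_le ⟨c, hc⟩

theorem exists_isNLColoring_nlChromaticNumber [Finite V] (G : SimpleGraph V) :
    ∃ c : V → Fin (nlChromaticNumber G), IsNLColoring G c :=
  Nat.sInf_mem (s := {k | ∃ c : V → Fin k, IsNLColoring G c})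
    ⟨Nat.card V, Finite.equivFin V, isNLColoring_of_injective G (Finite.equivFin V).injective⟩

theorem IsNLColoring.nlChromaticNumber_le_ncard_range {c : V → Fin k} (hc : IsNLColoring G c) :
    nlChromaticNumber G ≤ (range c).ncard := by
  let e := Finite.equivFin (range c)
  have hc' : IsNLColoring G (e ∘ rangeFactorization c) :=
    IsNLColoring.of_comp (g := Subtype.val ∘ e.symm) (by
      convert hc using 1
      funext v
      simp only [comp_apply, Equiv.symm_apply_apply]
      rfl)
  exact nlChromaticNumber_le hc'

end nlChromaticNumber

section graphJoin

variable {α β γ : Type*} {G : SimpleGraph α} {H : SimpleGraph β} {k : ℕ}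

theorem image_neighborSet_graphJoin_inl (f : α ⊕ β → γ) (a : α) :
    f '' (graphJoin G H).neighborSet (.inl a) =
      (f ∘ .inl) '' G.neighborSet a ∪ range (f ∘ .inr) := by
  ext x
  simp [graphJoin]

theorem image_neighborSet_graphJoin_inr (f : α ⊕ β → γ) (b : β) :
    f '' (graphJoin G H).neighborSet (.inr b) =
      (f ∘ .inr) '' H.neighborSet b ∪ range (f ∘ .inl) := by
  ext x
  simp [graphJoin, or_comm]

theorem IsNLColoring.disjoint_range_inl_inr {c : α ⊕ β → Fin k}
    (hc : IsNLColoring (graphJoin G H) c) : Disjoint (range (c ∘ .inl)) (range (c ∘ .inr)) := by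
  rw [disjoint_iff_forall_ne]
  rintro _ ⟨a, rfl⟩ _ ⟨b, rfl⟩
  exact hc.1 (.inl a) (.inr b) trivial

theorem isNLColoring_graphJoin_iff {c : α ⊕ β → Fin k}
    (hdisj : Disjoint (range (c ∘ .inl)) (range (c ∘ .inr))) :
    IsNLColoring (graphJoin G H) c ↔ IsNLColoring G (c ∘ .inl) ∧ IsNLColoring H (c ∘ .inr) := by
  constructor
  · intro hc
    refine ⟨⟨fun u v huv => hc.1 _ _ huv, fun u v hne h himg => ?_⟩,
      ⟨fun u v huv => hc.1 _ _ huv, fun u v hne h himg => ?_⟩⟩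
    · refine hc.2 (.inl u) (.inl v) (Sum.inl_injective.ne hne) h ?_
      rw [image_neighborSet_graphJoin_inl, image_neighborSet_graphJoin_inl, himg]
    · refine hc.2 (.inr u) (.inr v) (Sum.inr_injective.ne hne) h ?_
      rw [image_neighborSet_graphJoin_inr, image_neighborSet_graphJoin_inr, himg]
  · rintro ⟨h₁, h₂⟩
    have hcross (a : α) (b : β) : c (.inl a) ≠ c (.inr b) :=
      disjoint_iff_forall_ne.1 hdisj ⟨a, rfl⟩ ⟨b, rfl⟩
    -- every neighborhood on one side also sees all the colors of the other side
    have cancel {s t R : Set (Fin k)} (hs : Disjoint s R) (ht : Disjoint t R)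
        (h : s ∪ R = t ∪ R) : s = t := by
      rw [← hs.sdiff_eq_left, ← ht.sdiff_eq_left, ← union_sdiff_right, h, union_sdiff_right]
    refine ⟨?_, ?_⟩
    · rintro (u | u) (v | v) huv h
      exacts [h₁.1 u v huv h, hcross u v h, hcross v u h.symm, h₂.1 u v huv h]
    · rintro (u | u) (v | v) hne h himg
      · rw [image_neighborSet_graphJoin_inl, image_neighborSet_graphJoin_inl] at himg
        exact h₁.2 u v (ne_of_apply_ne _ hne) h <| cancel
          (hdisj.mono_left (image_subset_range _ _)) (hdisj.mono_left (image_subset_range _ _)) himg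
      · exact hcross u v h
      · exact hcross v u h.symm
      · rw [image_neighborSet_graphJoin_inr, image_neighborSet_graphJoin_inr] at himg
        exact h₂.2 u v (ne_of_apply_ne _ hne) h <| cancel (hdisj.symm.mono_left
          (image_subset_range _ _)) (hdisj.symm.mono_left (image_subset_range _ _)) himg

theorem IsNLColoring.graphJoin {k₁ k₂ : ℕ} {c₁ : α → Fin k₁} {c₂ : β → Fin k₂}
    (h₁ : IsNLColoring G c₁) (h₂ : IsNLColoring H c₂) :
    IsNLColoring (graphJoin G H) (finSumFinEquiv ∘ Sum.map c₁ c₂) := by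
  have hdisj : Disjoint (range (finSumFinEquiv ∘ Sum.map c₁ c₂ ∘ .inl))
      (range (finSumFinEquiv ∘ Sum.map c₁ c₂ ∘ .inr)) := by
    rw [disjoint_iff_forall_ne]
    rintro _ ⟨a, rfl⟩ _ ⟨b, rfl⟩ h
    exact Sum.inl_ne_inr (finSumFinEquiv.injective h)
  rw [isNLColoring_graphJoin_iff hdisj]
  exact ⟨h₁.comp_injective (finSumFinEquiv.injective.comp Sum.inl_injective),
    h₂.comp_injective (finSumFinEquiv.injective.comp Sum.inr_injective)⟩

variable [Finite α] [Finite β]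

theorem nlChromaticNumber_graphJoin_le :
    nlChromaticNumber (graphJoin G H) ≤ nlChromaticNumber G + nlChromaticNumber H := by
  obtain ⟨c₁, h₁⟩ := exists_isNLColoring_nlChromaticNumber G
  obtain ⟨c₂, h₂⟩ := exists_isNLColoring_nlChromaticNumber H
  exact nlChromaticNumber_le (h₁.graphJoin h₂)

theorem le_nlChromaticNumber_graphJoin :
    nlChromaticNumber G + nlChromaticNumber H ≤ nlChromaticNumber (graphJoin G H) := by
  obtain ⟨c, hc⟩ := exists_isNLColoring_nlChromaticNumber (graphJoin G H)
  have hdisj := hc.disjoint_range_inl_inr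
  obtain ⟨h₁, h₂⟩ := (isNLColoring_graphJoin_iff hdisj).1 hc
  calc nlChromaticNumber G + nlChromaticNumber H
      ≤ (range (c ∘ .inl)).ncard + (range (c ∘ .inr)).ncard :=
        add_le_add h₁.nlChromaticNumber_le_ncard_range h₂.nlChromaticNumber_le_ncard_range
    _ = (range c).ncard := by
        rw [← ncard_union_eq hdisj, ← Sum.elim_range, Sum.elim_comp_inl_inr]
    _ ≤ nlChromaticNumber (graphJoin G H) := by
        simpa using ncard_le_card (range c)

end graphJoin

/-- The NL-chromatic number of a join is the sum of the NL-chromatic numbers. -/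
theorem nlChromaticNumber_graphJoin
    {α β : Type*} [Fintype α] [Fintype β] (G₁ : SimpleGraph α) (G₂ : SimpleGraph β) :
    nlChromaticNumber (graphJoin G₁ G₂) = nlChromaticNumber G₁ + nlChromaticNumber G₂ :=
  nlChromaticNumber_graphJoin_le.antisymm le_nlChromaticNumber_graphJoin
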